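/- Let $\rho, \sigma$ be density matrices on $\mathbb{C}^d$ and let $\mathcal{E}_\sigma(\rho) = \sum_{i} E_i \rho E_i$ be the pinching with respect to the spectral projections $E_1,\dots,E_k$ of $\sigma$ (with $k$ distinct eigenvalues). Then for any $\alpha > 1$, $D_\alpha(\rho\|\sigma) \leq D_\alpha(\mathcal{E}_\sigma(\rho)\|\sigma) + \frac{\alpha}{\alpha-1}\log k$. -/

import Mathlib

/-!
Let `X = σ^((1-α)/2α)` and `M = XρX`. Being a function of `σ`, `X` commutes with every `E i`, so
`X 𝓔(ρ) X = 𝓔(M)`. Since `∑ i, E i = 1`, `∑ i j, (E i - E j) M (E i - E j) = 2 (k 𝓔(M) - M)`,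
whence the pinching inequality `M ≤ k 𝓔(M)`. By Weyl's monotonicity theorem the sorted eigenvalues
of `M` are at most `k` times those of `𝓔(M)`, so `tr M^α ≤ k^α tr 𝓔(M)^α`; now take `log₂` and
divide by `α - 1`. Since `log₂ 0 = 0`, the case `tr M^α = 0` is separate: there `M = 0`, hence
`𝓔(M) = 0`.
-/

open Matrix ComplexOrder

attribute [local instance] Classical.propDecidable

/-- Real power of a Hermitian matrix taken on its support (eigenvalue `0` is sent to `0`);
junk value `0` for non-Hermitian matrices. -/
noncomputable def mpow {d : ℕ} (A : Matrix (Fin d) (Fin d) ℂ) (r : ℝ) :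
    Matrix (Fin d) (Fin d) ℂ :=
  if hA : A.IsHermitian then
    hA.eigenvectorUnitary.1 *
      Matrix.diagonal (fun i =>
        if hA.eigenvalues i = 0 then 0 else ((hA.eigenvalues i ^ r : ℝ) : ℂ)) *
      (star hA.eigenvectorUnitary : Matrix (Fin d) (Fin d) ℂ)
  else 0

/-- Sandwiched Rényi relative entropy
`D_α(ρ‖σ) = (1/(α-1)) log₂ tr (σ^{(1-α)/2α} ρ σ^{(1-α)/2α})^α` (inverses on supports). -/
noncomputable def renyiD {d : ℕ} (α : ℝ) (ρ σ : Matrix (Fin d) (Fin d) ℂ) : ℝ :=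
  (1 / (α - 1)) * Real.logb 2
    ((mpow (mpow σ ((1 - α) / (2 * α)) * ρ * mpow σ ((1 - α) / (2 * α))) α).trace.re)

open scoped MatrixOrder InnerProductSpace
open Module Finset

theorem Submodule.inf_ne_bot_of_finrank_lt_add {K V : Type*} [DivisionRing K] [AddCommGroup V]
    [Module K V] [FiniteDimensional K V] {p q : Submodule K V}
    (h : finrank K V < finrank K p + finrank K q) : p ⊓ q ≠ ⊥ := by
  intro hpq
  have hdim := Submodule.finrank_sup_add_finrank_inf_eq p q
  rw [hpq, finrank_bot, add_zero] at hdim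
  have := Submodule.finrank_le (p ⊔ q)
  omega

namespace OrthonormalBasis

variable {ι 𝕜 E : Type*} [Fintype ι] [RCLike 𝕜] [NormedAddCommGroup E] [InnerProductSpace 𝕜 E]

theorem finrank_span_image (b : OrthonormalBasis ι 𝕜 E) (s : Finset ι) :
    finrank 𝕜 (Submodule.span 𝕜 (b '' s)) = #s := by
  rw [Set.image_eq_range, finrank_span_eq_card (b := fun i : (s : Set ι) => b i)
    (b.orthonormal.linearIndependent.comp _ Subtype.val_injective)]
  simp

theorem inner_eq_zero_of_mem_span_image (b : OrthonormalBasis ι 𝕜 E) {s : Set ι} {i : ι}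
    (hi : i ∉ s) {x : E} (hx : x ∈ Submodule.span 𝕜 (b '' s)) : ⟪b i, x⟫_𝕜 = 0 := by
  obtain ⟨l, hl, rfl⟩ := (Finsupp.mem_span_image_iff_linearCombination 𝕜).mp hx
  exact inner_eq_zero_symm.mp (b.orthonormal.inner_finsupp_eq_zero hi hl)

end OrthonormalBasis

namespace LinearMap.IsSymmetric

variable {𝕜 E : Type*} [RCLike 𝕜] [NormedAddCommGroup E] [InnerProductSpace 𝕜 E]
  [FiniteDimensional 𝕜 E] {n : ℕ} {S T : E →ₗ[𝕜] E}

theorem re_inner_apply_self_eq_sum (hT : T.IsSymmetric) (hn : finrank 𝕜 E = n) (x : E) :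
    RCLike.re ⟪T x, x⟫_𝕜 =
      ∑ i, hT.eigenvalues hn i * ‖⟪hT.eigenvectorBasis hn i, x⟫_𝕜‖ ^ 2 := by
  rw [← (hT.eigenvectorBasis hn).sum_inner_mul_inner, map_sum]
  refine Finset.sum_congr rfl fun i _ => ?_
  rw [hT, hT.apply_eigenvectorBasis, inner_smul_right, mul_assoc, RCLike.re_ofReal_mul,
    inner_mul_symm_re_eq_norm, norm_mul, norm_inner_symm x, sq]

theorem mul_norm_sq_le_re_inner_apply_self (hT : T.IsSymmetric) (hn : finrank 𝕜 E = n)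
    {s : Set (Fin n)} {c : ℝ} (hc : ∀ i ∈ s, c ≤ hT.eigenvalues hn i) {x : E}
    (hx : x ∈ Submodule.span 𝕜 (hT.eigenvectorBasis hn '' s)) :
    c * ‖x‖ ^ 2 ≤ RCLike.re ⟪T x, x⟫_𝕜 := by
  rw [hT.re_inner_apply_self_eq_sum hn, ← (hT.eigenvectorBasis hn).sum_sq_norm_inner_right,
    Finset.mul_sum]
  refine Finset.sum_le_sum fun i _ => ?_
  by_cases hi : i ∈ s
  · exact mul_le_mul_of_nonneg_right (hc i hi) (by positivity)
  · simp [(hT.eigenvectorBasis hn).inner_eq_zero_of_mem_span_image hi hx]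

theorem re_inner_apply_self_le_mul_norm_sq (hT : T.IsSymmetric) (hn : finrank 𝕜 E = n)
    {s : Set (Fin n)} {c : ℝ} (hc : ∀ i ∈ s, hT.eigenvalues hn i ≤ c) {x : E}
    (hx : x ∈ Submodule.span 𝕜 (hT.eigenvectorBasis hn '' s)) :
    RCLike.re ⟪T x, x⟫_𝕜 ≤ c * ‖x‖ ^ 2 := by
  rw [hT.re_inner_apply_self_eq_sum hn, ← (hT.eigenvectorBasis hn).sum_sq_norm_inner_right,
    Finset.mul_sum]
  refine Finset.sum_le_sum fun i _ => ?_
  by_cases hi : i ∈ s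
  · exact mul_le_mul_of_nonneg_right (hc i hi) (by positivity)
  · simp [(hT.eigenvectorBasis hn).inner_eq_zero_of_mem_span_image hi hx]

/-- Weyl's monotonicity theorem. The span of the first `i + 1` eigenvectors of `S` and that of
the eigenvectors of `T` from index `i` on have dimensions adding up to `n + 1`, so they share a
nonzero vector `x`, and `λᵢ(S) ‖x‖² ≤ ⟪S x, x⟫ ≤ ⟪T x, x⟫ ≤ λᵢ(T) ‖x‖²`. -/
theorem eigenvalues_le_eigenvalues (hS : S.IsSymmetric) (hT : T.IsSymmetric)
    (hn : finrank 𝕜 E = n) (hST : (T - S).IsPositive) (i : Fin n) :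
    hS.eigenvalues hn i ≤ hT.eigenvalues hn i := by
  set V := Submodule.span 𝕜 (hS.eigenvectorBasis hn '' ↑(Finset.Iic i))
  set W := Submodule.span 𝕜 (hT.eigenvectorBasis hn '' ↑(Finset.Ici i))
  have hVW : V ⊓ W ≠ ⊥ := by
    refine Submodule.inf_ne_bot_of_finrank_lt_add ?_
    rw [(hS.eigenvectorBasis hn).finrank_span_image, (hT.eigenvectorBasis hn).finrank_span_image,
      Fin.card_Iic, Fin.card_Ici]
    omega
  obtain ⟨x, ⟨hxV, hxW⟩, hx0⟩ := (Submodule.ne_bot_iff _).mp hVW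
  have hSx := hS.mul_norm_sq_le_re_inner_apply_self hn
    (fun j hj => hS.eigenvalues_antitone hn (Finset.mem_Iic.mp hj)) hxV
  have hTx := hT.re_inner_apply_self_le_mul_norm_sq hn
    (fun j hj => hT.eigenvalues_antitone hn (Finset.mem_Ici.mp hj)) hxW
  have hSTx := hST.re_inner_nonneg_left x
  rw [LinearMap.sub_apply, inner_sub_left, map_sub] at hSTx
  exact le_of_mul_le_mul_right (by linarith) (by positivity : 0 < ‖x‖ ^ 2)

end LinearMap.IsSymmetric

namespace Matrix

variable {n 𝕜 : Type*} [Fintype n] [DecidableEq n] [RCLike 𝕜] {A B : Matrix n n 𝕜}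

theorem IsHermitian.eigenvalues₀_le_eigenvalues₀ (hA : A.IsHermitian) (hB : B.IsHermitian)
    (hAB : A ≤ B) (i : Fin (Fintype.card n)) : hA.eigenvalues₀ i ≤ hB.eigenvalues₀ i := by
  refine LinearMap.IsSymmetric.eigenvalues_le_eigenvalues _ _ _ ?_ i
  rw [← map_sub, isPositive_toEuclideanLin_iff]
  exact hAB

theorem IsHermitian.sum_comp_eigenvalues (hA : A.IsHermitian) {M : Type*} [AddCommMonoid M]
    (f : ℝ → M) : ∑ i, f (hA.eigenvalues i) = ∑ i, f (hA.eigenvalues₀ i) :=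
  Equiv.sum_comp _ (f ∘ hA.eigenvalues₀)

theorem PosSemidef.eigenvalues₀_nonneg (hA : A.PosSemidef) (i : Fin (Fintype.card n)) :
    0 ≤ hA.1.eigenvalues₀ i := by
  simpa [IsHermitian.eigenvalues] using
    hA.eigenvalues_nonneg (Fintype.equivOfCardEq (Fintype.card_fin _) i)

theorem IsHermitian.trace_cfc (hA : A.IsHermitian) (f : ℝ → ℝ) :
    (cfc f A).trace = ∑ i, (f (hA.eigenvalues i) : 𝕜) := by
  rw [hA.cfc_eq, IsHermitian.cfc, Unitary.conjStarAlgAut_apply, trace_mul_cycle,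
    Unitary.coe_star_mul_self, one_mul, trace_diagonal]
  rfl

theorem re_trace_cfc_le_of_le (hA : 0 ≤ A) (hAB : A ≤ B) {f : ℝ → ℝ}
    (hf : MonotoneOn f (Set.Ici 0)) : RCLike.re (cfc f A).trace ≤ RCLike.re (cfc f B).trace := by
  have hA' : A.PosSemidef := nonneg_iff_posSemidef.mp hA
  have hB' : B.PosSemidef := nonneg_iff_posSemidef.mp (hA.trans hAB)
  simp only [hA'.1.trace_cfc, hB'.1.trace_cfc, map_sum, RCLike.ofReal_re,
    hA'.1.sum_comp_eigenvalues, hB'.1.sum_comp_eigenvalues]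
  exact Finset.sum_le_sum fun i _ => hf (hA'.eigenvalues₀_nonneg i) (hB'.eigenvalues₀_nonneg i)
    (hA'.1.eigenvalues₀_le_eigenvalues₀ hB'.1 hAB i)

/-- `tr A^r`, the `r`-th power of the Schatten `r`-norm when `0 ≤ A`. -/
noncomputable def traceRpow (r : ℝ) (A : Matrix n n 𝕜) : ℝ :=
  RCLike.re (cfc (fun x : ℝ => x ^ r) A).trace

theorem traceRpow_nonneg (hA : 0 ≤ A) (r : ℝ) : 0 ≤ traceRpow r A := by
  have hA' : A.PosSemidef := nonneg_iff_posSemidef.mp hA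
  rw [traceRpow, hA'.1.trace_cfc, map_sum]
  exact Finset.sum_nonneg fun i _ => by simpa using Real.rpow_nonneg (hA'.eigenvalues_nonneg i) r

theorem traceRpow_zero {r : ℝ} (hr : r ≠ 0) : traceRpow r (0 : Matrix n n 𝕜) = 0 := by
  simp [traceRpow, Real.zero_rpow hr]

theorem eq_zero_of_traceRpow_eq_zero (hA : 0 ≤ A) {r : ℝ} (hr : r ≠ 0)
    (h : traceRpow r A = 0) : A = 0 := by
  have hA' : A.PosSemidef := nonneg_iff_posSemidef.mp hA
  rw [traceRpow, hA'.1.trace_cfc, map_sum] at h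
  simp only [RCLike.ofReal_re] at h
  rw [Finset.sum_eq_zero_iff_of_nonneg fun i _ => Real.rpow_nonneg (hA'.eigenvalues_nonneg i) r]
    at h
  rw [← hA'.1.eigenvalues_eq_zero_iff]
  funext i
  exact (Real.rpow_eq_zero (hA'.eigenvalues_nonneg i) hr).mp (h i (Finset.mem_univ i))

theorem traceRpow_smul (hA : 0 ≤ A) {c : ℝ} (hc : 0 ≤ c) (r : ℝ) :
    traceRpow r (c • A) = c ^ r * traceRpow r A := by
  have hcomp := cfc_comp_smul c (fun x : ℝ => x ^ r) A
    ((finite_real_spectrum.image _).continuousOn _) (IsSelfAdjoint.of_nonneg hA)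
  rw [traceRpow, traceRpow, ← hcomp, cfc_congr (g := fun x => c ^ r * x ^ r),
    cfc_const_mul _ _ _ (finite_real_spectrum.continuousOn _), trace_smul,
    RCLike.real_smul_eq_coe_mul, RCLike.re_ofReal_mul]
  intro x hx
  exact Real.mul_rpow hc (spectrum_nonneg_of_nonneg hA hx)

theorem traceRpow_le_of_le_smul (hA : 0 ≤ A) (hB : 0 ≤ B) {c : ℝ} (hc : 0 ≤ c) {r : ℝ}
    (hr : 0 ≤ r) (hAB : A ≤ c • B) : traceRpow r A ≤ c ^ r * traceRpow r B :=
  (re_trace_cfc_le_of_le hA hAB (Real.monotoneOn_rpow_Ici_of_exponent_nonneg hr)).trans_eq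
    (traceRpow_smul hB hc r)

theorem le_nsmul_sum_mul_mul {k : ℕ} (E : Fin k → Matrix n n 𝕜) (hE : ∀ i, (E i).IsHermitian)
    (hsum : ∑ i, E i = 1) (hA : 0 ≤ A) : A ≤ k • ∑ i, E i * A * E i := by
  have key : ∑ i, ∑ j, (E i - E j) * A * (E i - E j) =
      (2 : 𝕜) • (k • ∑ i, E i * A * E i - A) := by
    simp only [sub_mul, mul_sub, Finset.sum_sub_distrib, ← Finset.mul_sum, ← Finset.sum_mul, hsum,
      Finset.sum_const, Finset.card_univ, Fintype.card_fin, one_mul, mul_one, mul_smul_comm,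
      ← Finset.smul_sum]
    module
  have hsq : 0 ≤ ∑ i, ∑ j, (E i - E j) * A * (E i - E j) :=
    Finset.sum_nonneg fun i _ => Finset.sum_nonneg fun j _ =>
      ((hE i).sub (hE j)).isSelfAdjoint.conjugate_nonneg hA
  rw [key] at hsq
  have := (nonneg_iff_posSemidef.mp hsq).smul (show (0 : 𝕜) ≤ 2⁻¹ by positivity)
  rwa [← nonneg_iff_posSemidef, inv_smul_smul₀ two_ne_zero, sub_nonneg] at this

end Matrix

theorem Commute.sum_smul_of_mul_eq_zero {ι R A : Type*} [Fintype ι] [CommSemiring R]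
    [Semiring A] [Algebra R A] {E : ι → A} (horth : ∀ i j, i ≠ j → E i * E j = 0) (μ : ι → R)
    (i : ι) : Commute (E i) (∑ j, μ j • E j) := by
  refine Commute.sum_right _ _ _ fun j _ => Commute.smul_right ?_ _
  rcases eq_or_ne i j with rfl | hij
  · exact Commute.refl _
  · exact (horth i j hij).trans (horth j i hij.symm).symm

theorem mul_sum_mul_mul_mul_of_commute {ι R : Type*} [Fintype ι] [Semiring R] {E : ι → R}
    {x : R} (h : ∀ i, Commute (E i) x) (b : R) :
    x * (∑ i, E i * b * E i) * x = ∑ i, E i * (x * b * x) * E i := by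
  rw [Finset.mul_sum, Finset.sum_mul]
  refine Finset.sum_congr rfl fun i _ => ?_
  calc x * (E i * b * E i) * x = x * E i * b * (E i * x) := by simp only [mul_assoc]
    _ = E i * x * b * (x * E i) := by rw [(h i).eq]
    _ = E i * (x * b * x) * E i := by simp only [mul_assoc]

theorem mpow_eq_cfc {d : ℕ} {A : Matrix (Fin d) (Fin d) ℂ} (hA : A.IsHermitian) (r : ℝ) :
    mpow A r = cfc (fun x : ℝ => if x = 0 then 0 else x ^ r) A := by
  rw [mpow, dif_pos hA, hA.cfc_eq, IsHermitian.cfc, Unitary.conjStarAlgAut_apply]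
  congr 3
  funext i
  split_ifs with h <;> simp [h]

theorem re_trace_mpow {d : ℕ} {A : Matrix (Fin d) (Fin d) ℂ} (hA : A.IsHermitian) {r : ℝ}
    (hr : r ≠ 0) : (mpow A r).trace.re = A.traceRpow r := by
  rw [mpow_eq_cfc hA, traceRpow, RCLike.re_to_complex]
  congr 4
  ext x
  split_ifs with hx <;> simp [hx, Real.zero_rpow hr]

/-- Since `logb β 0 = 0`, the case `a = 0` needs `b = 0`. -/
theorem Real.logb_le_logb_add_mul_logb_natCast {β a b y : ℝ} {k : ℕ} (hβ : 1 < β) (ha : 0 ≤ a)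
    (hy : 0 < y) (hab : a ≤ k ^ y * b) (hb : a = 0 → b = 0) :
    logb β a ≤ logb β b + y * logb β k := by
  rcases ha.eq_or_lt with rfl | ha
  · rw [hb rfl, logb_zero, zero_add]
    exact mul_nonneg hy.le (div_nonneg (log_natCast_nonneg k) (log_nonneg hβ.le))
  have hk : (0 : ℝ) < k := by
    rcases (Nat.cast_nonneg (α := ℝ) k).eq_or_lt with hk | hk
    · rw [← hk, zero_rpow hy.ne', zero_mul] at hab
      linarith
    · exact hk
  have hb : 0 < b := pos_of_mul_pos_right (ha.trans_le hab) (rpow_nonneg hk.le y)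
  calc logb β a ≤ logb β (k ^ y * b) := logb_le_logb_of_le hβ ha hab
    _ = logb β b + y * logb β k := by
      rw [logb_mul (rpow_pos_of_pos hk y).ne' hb.ne', logb_rpow_eq_mul_logb_of_pos hk, add_comm]

theorem renyiD_le_pinching_general {d k : ℕ} (ρ σ : Matrix (Fin d) (Fin d) ℂ)
    (hρ : ρ.PosSemidef) (hσ : σ.PosSemidef)
    (E : Fin k → Matrix (Fin d) (Fin d) ℂ) (μ : Fin k → ℝ)
    (hherm : ∀ i, (E i).IsHermitian)
    (horth : ∀ i j, i ≠ j → E i * E j = 0) (hsum : ∑ i, E i = 1)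
    (hdecomp : σ = ∑ i, μ i • E i)
    (α : ℝ) (hα : 1 < α) :
    renyiD α ρ σ ≤ renyiD α (∑ i, E i * ρ * E i) σ + (α / (α - 1)) * Real.logb 2 k := by
  rw [← nonneg_iff_posSemidef] at hρ
  have hXcfc := mpow_eq_cfc hσ.1 ((1 - α) / (2 * α))
  set X := mpow σ ((1 - α) / (2 * α))
  have hX : IsSelfAdjoint X := hXcfc ▸ cfc_predicate _ _
  have hEX : ∀ i, Commute (E i) X := fun i => hXcfc ▸
    ((hdecomp ▸ Commute.sum_smul_of_mul_eq_zero horth μ i).symm.cfc_real _).symm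
  have hM : 0 ≤ X * ρ * X := hX.conjugate_nonneg hρ
  have hN : 0 ≤ ∑ i, E i * (X * ρ * X) * E i :=
    Finset.sum_nonneg fun i _ => (hherm i).isSelfAdjoint.conjugate_nonneg hM
  have hle := le_nsmul_sum_mul_mul E hherm hsum hM
  rw [← Nat.cast_smul_eq_nsmul ℝ] at hle
  have hα0 : α ≠ 0 := by positivity
  have hlog := Real.logb_le_logb_add_mul_logb_natCast one_lt_two (traceRpow_nonneg hM α)
    (by positivity) (traceRpow_le_of_le_smul hM hN (Nat.cast_nonneg k) (by positivity) hle)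
    fun h => by rw [eq_zero_of_traceRpow_eq_zero hM hα0 h]; simpa using traceRpow_zero hα0
  rw [renyiD, renyiD, mul_sum_mul_mul_mul_of_commute hEX, re_trace_mpow hM.isSelfAdjoint hα0,
    re_trace_mpow hN.isSelfAdjoint hα0]
  have hα1 : 0 < 1 / (α - 1) := one_div_pos.mpr (by linarith)
  simpa only [mul_add, ← mul_assoc, one_div_mul_eq_div] using
    mul_le_mul_of_nonneg_left hlog hα1.le

/-- Pinching bound: if `σ = ∑ i, μ i • E i` is the spectral decomposition of `σ` into `k`
distinct eigenvalues, then `D_α(ρ‖σ) ≤ D_α(E_σ(ρ)‖σ) + (α/(α-1)) log k`, where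
`E_σ(ρ) = ∑ i, E i * ρ * E i` is the pinching. -/
theorem renyiD_le_pinching {d k : ℕ} (ρ σ : Matrix (Fin d) (Fin d) ℂ)
    (hρ : ρ.PosSemidef) (hσ : σ.PosSemidef) (hρ1 : ρ.trace = 1) (hσ1 : σ.trace = 1)
    (E : Fin k → Matrix (Fin d) (Fin d) ℂ) (μ : Fin k → ℝ)
    (hherm : ∀ i, (E i).IsHermitian) (hproj : ∀ i, E i * E i = E i)
    (horth : ∀ i j, i ≠ j → E i * E j = 0) (hsum : ∑ i, E i = 1)
    (hdecomp : σ = ∑ i, μ i • E i) (hdist : Function.Injective μ)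
    (α : ℝ) (hα : 1 < α) :
    renyiD α ρ σ ≤ renyiD α (∑ i, E i * ρ * E i) σ + (α / (α - 1)) * Real.logb 2 k :=
  renyiD_le_pinching_general ρ σ hρ hσ E μ hherm horth hsum hdecomp α hα
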